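/- (L1 approximation error, Lemma 2.1.) Let α ∈ (0,1), τ > 0, t_j = jτ, n ≥ 1, and v ∈ C²[0, t_n]. With a_j^{(α)} = ((j+1)^{1-α} - j^{1-α})/Γ(2-α) and δ_t^α v^n = τ^{-α}[a_0^{(α)} v^n - Σ_{k=1}^{n-1}(a_{n-k-1}^{(α)} - a_{n-k}^{(α)}) v^k - a_{n-1}^{(α)} v^0] (where v^j = v(t_j)), there exists a constant c_α depending only on α such that |₀^C D_t^α v(t_n) - δ_t^α v^n| ≤ c_α · (max_{0 ≤ t ≤ t_n} |v''(t)|) · τ^{2-α}. -/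

import Mathlib

/-!
On the cell `[t_k, t_{k+1}]` the L1 scheme replaces `v'` by the slope `d_k` of the chord, so that
`δ_t^α v^n` is the Caputo derivative of the piecewise linear interpolant of `v`. As `v' - d_k` has
mean zero on the cell, the increasing kernel `ω(s) = (t_n - s)^{-α}` may be replaced there by
`ω(s) - ω(t_k) ≥ 0`, while `|v' - d_k| ≤ M τ` by the mean value theorem. The cell error is thus at
most `M τ ∫ (ω - ω(t_k))`, which is `M τ^{2-α} / (1 - α)` times the defect of the right rectangle
rule for `∫_j^{j+1} (1 - α) x^{-α} dx`. By concavity of `x ↦ x^{1-α}` these defects telescope to at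
most `1`.
-/

open Real Finset intervalIntegral

noncomputable def aCoeff (α : ℝ) (j : ℕ) : ℝ :=
  (((j : ℝ) + 1) ^ (1 - α) - (j : ℝ) ^ (1 - α)) / Real.Gamma (2 - α)

/-- The L1 backward difference quotient δ_t^α applied to the grid values v^j = v(jτ). -/
noncomputable def deltaL1 (α τ : ℝ) (v : ℝ → ℝ) (n : ℕ) : ℝ :=
  τ ^ (-α) * (aCoeff α 0 * v ((n : ℝ) * τ)
    - (∑ k ∈ Finset.Ico 1 n, (aCoeff α (n - k - 1) - aCoeff α (n - k)) * v ((k : ℝ) * τ))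
    - aCoeff α (n - 1) * v 0)

noncomputable def caputoAlpha (α : ℝ) (v : ℝ → ℝ) (t : ℝ) : ℝ :=
  (1 / Real.Gamma (1 - α)) * ∫ s in (0 : ℝ)..t, deriv v s * (t - s) ^ (-α)

open Set
open scoped MeasureTheory Interval
open MeasureTheory (volume ae_restrict_iff' Ioo_ae_eq_Ioc)

lemma ae_mem_Ioc_imp_of_forall_mem_Ioo {a b : ℝ} {p : ℝ → Prop} (h : ∀ x ∈ Ioo a b, p x) :
    ∀ᵐ x, x ∈ Ioc a b → p x := by
  filter_upwards [(Ioo_ae_eq_Ioc (μ := volume) (a := a) (b := b)).mem_iff] with x hx hxb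
  exact h x (hx.2 hxb)

lemma abs_integral_mul_le_of_integral_eq_zero {g ω : ℝ → ℝ} {a b C : ℝ} (hab : a ≤ b)
    (hg : IntervalIntegrable g volume a b) (hω : IntervalIntegrable ω volume a b)
    (hgω : IntervalIntegrable (fun s => g s * ω s) volume a b) (hg0 : ∫ s in a..b, g s = 0)
    (hgC : ∀ s ∈ Ioo a b, |g s| ≤ C) (hωa : ∀ s ∈ Ioo a b, ω a ≤ ω s) :
    |∫ s in a..b, g s * ω s| ≤ C * ∫ s in a..b, (ω s - ω a) := by
  -- `g` has mean zero, so the weight may be shifted by its smallest value `ω a`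
  have hshift : ∫ s in a..b, g s * ω s = ∫ s in a..b, g s * (ω s - ω a) := by
    simp only [mul_sub]
    rw [integral_sub hgω (hg.mul_const _), integral_mul_const, hg0, zero_mul, sub_zero]
  have hbound : ∀ s ∈ Ioo a b, ‖g s * (ω s - ω a)‖ ≤ C * (ω s - ω a) := fun s hs => by
    rw [norm_mul, Real.norm_eq_abs, Real.norm_eq_abs, abs_of_nonneg (sub_nonneg.2 (hωa s hs))]
    exact mul_le_mul_of_nonneg_right (hgC s hs) (sub_nonneg.2 (hωa s hs))
  rw [hshift, ← integral_const_mul]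
  exact norm_integral_le_of_norm_le hab (ae_mem_Ioc_imp_of_forall_mem_Ioo hbound)
    ((hω.sub intervalIntegrable_const).const_mul C)

section Cell

variable {v : ℝ → ℝ} {a b M : ℝ}

lemma abs_deriv_sub_slope_le (hab : a < b) (hv : ContinuousOn v (Icc a b))
    (hv' : DifferentiableOn ℝ v (Ioo a b)) (hv'' : DifferentiableOn ℝ (deriv v) (Ioo a b))
    (hM : ∀ x ∈ Ioo a b, |deriv (deriv v) x| ≤ M) {s : ℝ} (hs : s ∈ Ioo a b) :
    |deriv v s - (v b - v a) / (b - a)| ≤ M * (b - a) := by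
  obtain ⟨ξ, hξ, hξv⟩ := exists_deriv_eq_slope v hab hv hv'
  have hlip := (convex_Ioo a b).norm_image_sub_le_of_norm_deriv_le
    (fun x hx => hv''.differentiableAt (isOpen_Ioo.mem_nhds hx)) (fun x hx => hM x hx) hξ hs
  have hM0 : 0 ≤ M := (abs_nonneg _).trans (hM ξ hξ)
  rw [← hξv]
  calc |deriv v s - deriv v ξ| ≤ M * |s - ξ| := hlip
    _ ≤ M * (b - a) := by
      gcongr
      exact abs_sub_le_of_le_of_le hs.1.le hs.2.le hξ.1.le hξ.2.le

lemma intervalIntegrable_deriv_mul {ω : ℝ → ℝ} (hab : a < b) (hv : ContinuousOn v (Icc a b))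
    (hv' : DifferentiableOn ℝ v (Ioo a b)) (hv'' : DifferentiableOn ℝ (deriv v) (Ioo a b))
    (hM : ∀ x ∈ Ioo a b, |deriv (deriv v) x| ≤ M) (hω : IntervalIntegrable ω volume a b) :
    IntervalIntegrable (fun s => deriv v s * ω s) volume a b := by
  set d := (v b - v a) / (b - a)
  have hbound : ∀ᵐ s ∂volume.restrict (Ι a b), ‖deriv v s‖ ≤ |d| + M * (b - a) := by
    rw [uIoc_of_le hab.le, ae_restrict_iff' measurableSet_Ioc]
    refine ae_mem_Ioc_imp_of_forall_mem_Ioo fun s hs => ?_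
    have := abs_deriv_sub_slope_le hab hv hv' hv'' hM hs
    rw [Real.norm_eq_abs]
    linarith [abs_sub_abs_le_abs_sub (deriv v s) d]
  exact intervalIntegrable_iff.2
    (hω.def'.bdd_mul (measurable_deriv v).aestronglyMeasurable hbound)

lemma abs_integral_deriv_mul_sub_slope_le {ω : ℝ → ℝ} (hab : a < b)
    (hv : ContinuousOn v (Icc a b)) (hv' : DifferentiableOn ℝ v (Ioo a b))
    (hv'' : DifferentiableOn ℝ (deriv v) (Ioo a b)) (hM : ∀ x ∈ Ioo a b, |deriv (deriv v) x| ≤ M)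
    (hω : IntervalIntegrable ω volume a b) (hωa : ∀ s ∈ Ioo a b, ω a ≤ ω s) :
    |(∫ s in a..b, deriv v s * ω s) - (v b - v a) / (b - a) * ∫ s in a..b, ω s|
      ≤ M * (b - a) * ∫ s in a..b, (ω s - ω a) := by
  set d := (v b - v a) / (b - a)
  have hv'ω := intervalIntegrable_deriv_mul hab hv hv' hv'' hM hω
  have hv'1 : IntervalIntegrable (deriv v) volume a b := by
    simpa using intervalIntegrable_deriv_mul hab hv hv' hv'' hM (ω := fun _ => 1)
      intervalIntegrable_const
  have hftc : ∫ s in a..b, deriv v s = v b - v a :=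
    integral_eq_sub_of_hasDerivAt_of_le hab.le hv
      (fun x hx => (hv'.differentiableAt (isOpen_Ioo.mem_nhds hx)).hasDerivAt) hv'1
  have hmean : ∫ s in a..b, (deriv v s - d) = 0 := by
    rw [integral_sub hv'1 intervalIntegrable_const, hftc, integral_const, smul_eq_mul]
    simp only [d]
    field_simp [sub_ne_zero.2 hab.ne']
    ring
  have hprod : ∫ s in a..b, (deriv v s - d) * ω s
      = (∫ s in a..b, deriv v s * ω s) - d * ∫ s in a..b, ω s := by
    simp only [sub_mul]
    rw [integral_sub hv'ω (hω.const_mul d), integral_const_mul]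
  rw [← hprod]
  refine abs_integral_mul_le_of_integral_eq_zero hab.le (hv'1.sub intervalIntegrable_const) hω
    ?_ hmean (fun s hs => abs_deriv_sub_slope_le hab hv hv' hv'' hM hs) hωa
  simpa only [sub_mul] using hv'ω.sub (hω.const_mul d)

end Cell

lemma sum_Ico_sub_mul_eq_sum_range {R : Type*} [CommRing R] (w b : ℕ → R) (n : ℕ) :
    b 0 * w n - (∑ k ∈ Ico 1 n, (b (n - k - 1) - b (n - k)) * w k) - b (n - 1) * w 0
      = ∑ k ∈ range n, (w (k + 1) - w k) * b (n - 1 - k) := by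
  cases n with
  | zero => simp
  | succ m =>
    have hterm : ∀ i ∈ range m, (b (m + 1 - (1 + i) - 1) - b (m + 1 - (1 + i))) * w (1 + i)
        = w (i + 1) * b (m - (i + 1)) - w (i + 1) * b (m - i) := fun i _ => by
      rw [show m + 1 - (1 + i) - 1 = m - (i + 1) by omega, show m + 1 - (1 + i) = m - i by omega,
        add_comm 1 i]
      ring
    rw [sum_Ico_eq_sum_range, Nat.add_sub_cancel, sum_congr rfl hterm]
    simp only [sub_mul, sum_sub_distrib]
    rw [sum_range_succ (fun k => w (k + 1) * b (m - k)), sum_range_succ' (fun k => w k * b (m - k))]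
    simp only [Nat.sub_self, Nat.sub_zero]
    ring

lemma rpow_add_one_sub_rpow_le {p x : ℝ} (hp0 : 0 ≤ p) (hp1 : p ≤ 1) (hx : 0 < x) :
    (x + 1) ^ p - x ^ p ≤ p * x ^ (p - 1) := by
  have hbern := rpow_one_add_le_one_add_mul_self (s := x⁻¹) (by linarith [inv_pos.2 hx]) hp0 hp1
  have hsplit : x + 1 = x * (1 + x⁻¹) := by field_simp
  rw [hsplit, mul_rpow hx.le (by positivity), rpow_sub_one hx.ne']
  calc x ^ p * (1 + x⁻¹) ^ p - x ^ p ≤ x ^ p * (1 + p * x⁻¹) - x ^ p := by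
        gcongr
    _ = p * (x ^ p / x) := by ring

lemma sum_range_rpow_succ_sub_rpow_sub_le_one {p : ℝ} (hp0 : 0 ≤ p) (hp1 : p ≤ 1) (n : ℕ) :
    ∑ j ∈ range n, (((j : ℝ) + 1) ^ p - (j : ℝ) ^ p - p * ((j : ℝ) + 1) ^ (p - 1)) ≤ 1 := by
  set c : ℕ → ℝ := fun j => ((j : ℝ) + 1) ^ p - (j : ℝ) ^ p
  have hstep : ∀ j : ℕ, c (j + 1) ≤ p * ((j : ℝ) + 1) ^ (p - 1) := fun j => by
    simpa [c, add_assoc, one_add_one_eq_two] using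
      rpow_add_one_sub_rpow_le hp0 hp1 (x := (j : ℝ) + 1) (by positivity)
  have hc0 : c 0 ≤ 1 := by simp [c, zero_rpow_nonneg]
  have hcn : 0 ≤ c n := sub_nonneg.2 (rpow_le_rpow (by positivity) (by linarith) hp0)
  calc ∑ j ∈ range n, (c j - p * ((j : ℝ) + 1) ^ (p - 1))
      ≤ ∑ j ∈ range n, (c j - c (j + 1)) := sum_le_sum fun j _ => by linarith [hstep j]
    _ = c 0 - c n := sum_range_sub' c n
    _ ≤ 1 := by linarith

lemma Gamma_two_sub {α : ℝ} (hα : α < 1) : Gamma (2 - α) = (1 - α) * Gamma (1 - α) := by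
  rw [show 2 - α = (1 - α) + 1 by ring, Gamma_add_one (by linarith)]

section Kernel

variable {α : ℝ}

lemma intervalIntegrable_sub_rpow_neg (hα : α < 1) (t a b : ℝ) :
    IntervalIntegrable (fun s => (t - s) ^ (-α)) volume a b := by
  simpa using
    (intervalIntegrable_rpow' (r := -α) (by linarith) (a := t - a) (b := t - b)).comp_sub_left t

lemma integral_sub_rpow_neg (hα : α < 1) (t a b : ℝ) :
    ∫ s in a..b, (t - s) ^ (-α) = ((t - a) ^ (1 - α) - (t - b) ^ (1 - α)) / (1 - α) := by
  rw [integral_comp_sub_left (fun u => u ^ (-α)) t, integral_rpow (Or.inl (by linarith))]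
  ring_nf

lemma integral_grid_cell_sub_rpow_neg (hα : α < 1) {τ : ℝ} (hτ : 0 ≤ τ) (k j : ℕ) :
    ∫ s in k * τ..(k + 1) * τ, ((k + j + 1) * τ - s) ^ (-α)
      = τ ^ (1 - α) * (((j : ℝ) + 1) ^ (1 - α) - (j : ℝ) ^ (1 - α)) / (1 - α) := by
  rw [integral_sub_rpow_neg hα, show (k + j + 1) * τ - k * τ = ((j : ℝ) + 1) * τ by ring,
    show (k + j + 1) * τ - (k + 1) * τ = (j : ℝ) * τ by ring, mul_rpow (by positivity) hτ,
    mul_rpow (by positivity) hτ]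
  ring

end Kernel

lemma deltaL1_eq_sum {α τ : ℝ} (hα : α < 1) (hτ : 0 < τ) (v : ℝ → ℝ) (n : ℕ) :
    deltaL1 α τ v n = 1 / Gamma (1 - α) * ∑ k ∈ range n,
      (v ((k + 1) * τ) - v (k * τ)) / τ * ∫ s in k * τ..(k + 1) * τ, (n * τ - s) ^ (-α) := by
  have habel := sum_Ico_sub_mul_eq_sum_range (fun k => v (k * τ)) (aCoeff α) n
  simp only [Nat.cast_zero, zero_mul] at habel
  rw [deltaL1, habel, mul_sum, mul_sum]
  refine sum_congr rfl fun k hk => ?_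
  obtain ⟨j, rfl⟩ : ∃ j, n = k + j + 1 := ⟨n - k - 1, by have := mem_range.1 hk; omega⟩
  have hΓ : 0 < Gamma (1 - α) := Gamma_pos_of_pos (by linarith)
  rw [show k + j + 1 - 1 - k = j by omega]
  push_cast
  rw [integral_grid_cell_sub_rpow_neg hα hτ.le, aCoeff, Gamma_two_sub hα,
    show 1 - α = 1 + -α by ring, rpow_add hτ, rpow_one]
  field_simp

lemma abs_grid_cell_error_le {α τ M : ℝ} {v : ℝ → ℝ} (hα0 : 0 ≤ α) (hα1 : α < 1) (hτ : 0 < τ)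
    (k j : ℕ) (hv : ContinuousOn v (Icc (k * τ) ((k + 1) * τ)))
    (hv' : DifferentiableOn ℝ v (Ioo (k * τ) ((k + 1) * τ)))
    (hv'' : DifferentiableOn ℝ (deriv v) (Ioo (k * τ) ((k + 1) * τ)))
    (hM : ∀ x ∈ Ioo (k * τ) ((k + 1) * τ), |deriv (deriv v) x| ≤ M) :
    |(∫ s in k * τ..(k + 1) * τ, deriv v s * ((k + j + 1) * τ - s) ^ (-α))
        - (v ((k + 1) * τ) - v (k * τ)) / τ
          * ∫ s in k * τ..(k + 1) * τ, ((k + j + 1) * τ - s) ^ (-α)|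
      ≤ M * τ ^ (2 - α) / (1 - α)
        * (((j : ℝ) + 1) ^ (1 - α) - (j : ℝ) ^ (1 - α) - (1 - α) * ((j : ℝ) + 1) ^ (-α)) := by
  have hab : (k : ℝ) * τ < (k + 1) * τ := by nlinarith
  have hmono : ∀ s ∈ Ioo ((k : ℝ) * τ) ((k + 1) * τ),
      ((k + j + 1) * τ - k * τ) ^ (-α) ≤ ((k + j + 1) * τ - s) ^ (-α) := fun s hs =>
    rpow_le_rpow_of_nonpos (by nlinarith [hs.2, (j.cast_nonneg : (0 : ℝ) ≤ j)])
      (by linarith [hs.1]) (by linarith)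
  have hcell := abs_integral_deriv_mul_sub_slope_le hab hv hv' hv'' hM
    (intervalIntegrable_sub_rpow_neg hα1 _ _ _) hmono
  rw [show ((k : ℝ) + 1) * τ - k * τ = τ by ring] at hcell
  have hτ₁ : τ ^ (1 - α) = τ * τ ^ (-α) := by
    rw [sub_eq_add_neg, rpow_add hτ, rpow_one]
  have hτ₂ : τ ^ (2 - α) = τ * τ * τ ^ (-α) := by
    rw [show 2 - α = 1 + (1 - α) by ring, rpow_add hτ, rpow_one, hτ₁, mul_assoc]
  have h1α : 1 - α ≠ 0 := by linarith
  refine hcell.trans (le_of_eq ?_)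
  rw [integral_sub (intervalIntegrable_sub_rpow_neg hα1 _ _ _) intervalIntegrable_const,
    integral_grid_cell_sub_rpow_neg hα1 hτ.le, integral_const, smul_eq_mul,
    show ((k : ℝ) + 1) * τ - k * τ = τ by ring,
    show ((k : ℝ) + j + 1) * τ - k * τ = ((j : ℝ) + 1) * τ by ring,
    mul_rpow (by positivity) hτ.le, hτ₂, hτ₁]
  field_simp

lemma abs_caputoAlpha_sub_deltaL1_le {α τ M : ℝ} {v : ℝ → ℝ} (hα0 : 0 ≤ α) (hα1 : α < 1)
    (hτ : 0 < τ) (n : ℕ) (hv : ContDiffOn ℝ 2 v (Icc 0 (n * τ)))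
    (hM : ∀ x ∈ Ioo 0 (n * τ), |deriv (deriv v) x| ≤ M) :
    |caputoAlpha α v (n * τ) - deltaL1 α τ v n|
      ≤ M * τ ^ (2 - α) / Gamma (2 - α) * ∑ j ∈ range n,
          (((j : ℝ) + 1) ^ (1 - α) - (j : ℝ) ^ (1 - α) - (1 - α) * ((j : ℝ) + 1) ^ (-α)) := by
  have hv1 : DifferentiableOn ℝ v (Ioo 0 (n * τ)) :=
    (hv.differentiableOn (by norm_num)).mono Ioo_subset_Icc_self
  have hv2 : DifferentiableOn ℝ (deriv v) (Ioo 0 (n * τ)) :=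
    ((hv.mono Ioo_subset_Icc_self).deriv_of_isOpen isOpen_Ioo (m := 1)
      (by norm_num)).differentiableOn (by norm_num)
  have hcell : ∀ k < n, ContinuousOn v (Icc (k * τ) ((k + 1) * τ))
      ∧ DifferentiableOn ℝ v (Ioo (k * τ) ((k + 1) * τ))
      ∧ DifferentiableOn ℝ (deriv v) (Ioo (k * τ) ((k + 1) * τ))
      ∧ ∀ x ∈ Ioo (k * τ) ((k + 1) * τ), |deriv (deriv v) x| ≤ M := fun k hk => by
    have h0 : 0 ≤ (k : ℝ) * τ := by positivity
    have hn : ((k : ℝ) + 1) * τ ≤ n * τ := by gcongr; exact_mod_cast hk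
    exact ⟨hv.continuousOn.mono (Icc_subset_Icc h0 hn), hv1.mono (Ioo_subset_Ioo h0 hn),
      hv2.mono (Ioo_subset_Ioo h0 hn), fun x hx => hM x (Ioo_subset_Ioo h0 hn hx)⟩
  have hsplit : caputoAlpha α v (n * τ) = 1 / Gamma (1 - α) * ∑ k ∈ range n,
      ∫ s in k * τ..(k + 1) * τ, deriv v s * (n * τ - s) ^ (-α) := by
    have hsum := sum_integral_adjacent_intervals (a := fun k : ℕ => (k : ℝ) * τ)
      (f := fun s => deriv v s * (n * τ - s) ^ (-α)) (μ := volume) fun k hk => by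
        obtain ⟨hc, hd1, hd2, hMk⟩ := hcell k hk
        push_cast
        exact intervalIntegrable_deriv_mul (by nlinarith) hc hd1 hd2 hMk
          (intervalIntegrable_sub_rpow_neg hα1 _ _ _)
    push_cast at hsum
    rw [caputoAlpha, hsum, zero_mul]
  have hΓ : 0 < Gamma (1 - α) := Gamma_pos_of_pos (by linarith)
  rw [hsplit, deltaL1_eq_sum hα1 hτ, ← mul_sub, ← sum_sub_distrib, abs_mul,
    abs_of_pos (by positivity)]
  set D : ℕ → ℝ := fun j =>
    ((j : ℝ) + 1) ^ (1 - α) - (j : ℝ) ^ (1 - α) - (1 - α) * ((j : ℝ) + 1) ^ (-α)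
  calc _ ≤ 1 / Gamma (1 - α) * ∑ k ∈ range n, M * τ ^ (2 - α) / (1 - α) * D (n - 1 - k) := by
        gcongr
        refine (abs_sum_le_sum_abs _ _).trans (sum_le_sum fun k hk => ?_)
        obtain ⟨hc, hd1, hd2, hMk⟩ := hcell k (mem_range.1 hk)
        obtain ⟨j, rfl⟩ : ∃ j, n = k + j + 1 := ⟨n - k - 1, by have := mem_range.1 hk; omega⟩
        rw [show k + j + 1 - 1 - k = j by omega]
        push_cast
        exact abs_grid_cell_error_le hα0 hα1 hτ k j hc hd1 hd2 hMk
    _ = _ := by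
        rw [sum_range_reflect (fun j => M * τ ^ (2 - α) / (1 - α) * D j) n, ← mul_sum,
          Gamma_two_sub hα1]
        field_simp

/-- L1 approximation error, Lemma 2.1: there is c_α, depending only on α,
with |₀^C D_t^α v(t_n) - δ_t^α v^n| ≤ c_α · max_{[0,t_n]} |v''| · τ^{2-α}. -/
theorem L1_approximation_error (α : ℝ) (hα0 : 0 < α) (hα1 : α < 1) :
    ∃ c : ℝ, 0 < c ∧ ∀ (τ : ℝ), 0 < τ → ∀ (n : ℕ), 1 ≤ n → ∀ (v : ℝ → ℝ),
      ContDiffOn ℝ 2 v (Set.Icc 0 ((n : ℝ) * τ)) →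
      ∀ M : ℝ, (∀ t ∈ Set.Icc (0 : ℝ) ((n : ℝ) * τ), |deriv (deriv v) t| ≤ M) →
        |caputoAlpha α v ((n : ℝ) * τ) - deltaL1 α τ v n| ≤ c * M * τ ^ (2 - α) := by
  have hΓ : 0 < Gamma (2 - α) := Gamma_pos_of_pos (by linarith)
  refine ⟨1 / Gamma (2 - α), by positivity, fun τ hτ n _ v hv M hM => ?_⟩
  have hM0 : 0 ≤ M := (abs_nonneg _).trans (hM 0 ⟨le_rfl, by positivity⟩)
  calc _ ≤ M * τ ^ (2 - α) / Gamma (2 - α) * ∑ j ∈ range n,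
          (((j : ℝ) + 1) ^ (1 - α) - (j : ℝ) ^ (1 - α) - (1 - α) * ((j : ℝ) + 1) ^ (-α)) :=
        abs_caputoAlpha_sub_deltaL1_le hα0.le hα1 hτ n hv fun x hx => hM x (Ioo_subset_Icc_self hx)
    _ ≤ M * τ ^ (2 - α) / Gamma (2 - α) * 1 := by
        gcongr
        simpa [show 1 - α - 1 = -α by ring] using
          sum_range_rpow_succ_sub_rpow_sub_le_one (p := 1 - α) (by linarith) (by linarith) n
    _ = 1 / Gamma (2 - α) * M * τ ^ (2 - α) := by ring
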